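/- Relation (X3): Let u be a 0-grassmannian affine permutation, let a < b < c < d be integers with b − a ≤ k and d − c ≤ k, and set q = (b − a) + (d − c). Suppose q < n, b ≡ c (mod n), and u(a+q) ≤ 0. If the composite u·t_{a,b}·t_{c,d} is defined, then the composite u·t_{d−q,d}·t_{a,b} is defined and the two resulting affine permutations are equal. -/

import Mathlib

/-!
Write `p = c - b`, a multiple of `n`. Conjugating by `t_{a,b}` moves `t_{c,d}` to
`t_{t_{a,b} c, t_{a,b} d} = t_{a+p,d}`, and `a + p = d - q`; this gives the equality of the two
composites. Definedness of the new composite is inherited from the old one: `u` shifts values by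
`p` when positions are shifted by `p`, so the window `(a, b)` of `t_{a,b}` at `u` reappears as
`(d - q, c)`, and `u (a + q) ≤ 0` makes `u d ≤ p < u c`.
-/

open Function

/-- The affine transposition `t_{a,b}` of period `n`: it exchanges `a + m*n` and
`b + m*n` for every `m : ℤ` and fixes all other integers. -/
def affT (n a b : ℤ) : ℤ → ℤ := fun i =>
  if (i - a) % n = 0 then i - a + b
  else if (i - b) % n = 0 then i - b + a
  else i

/-- `u` is an affine permutation of period `n`: a bijection of `ℤ` with
`u (i + n) = u i + n` and `∑_{i=1}^{n} u i = n (n+1) / 2`. -/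
def IsAffinePerm (n : ℤ) (u : ℤ → ℤ) : Prop :=
  Function.Bijective u ∧ (∀ i : ℤ, u (i + n) = u i + n) ∧
    ∑ i ∈ Finset.Icc (1 : ℤ) n, u i = n * (n + 1) / 2

/-- The operator `t_{a,b}` is defined at `u`:
`u a ≤ 0 < u b` and for every `a < i < b`, either `u i < u a` or `u i > u b`. -/
def DefinedAt (u : ℤ → ℤ) (a b : ℤ) : Prop :=
  u a ≤ 0 ∧ 0 < u b ∧ ∀ i : ℤ, a < i → i < b → u i < u a ∨ u b < u i

/-- `u` is 0-grassmannian: the positions of the values `1, 2, …, n` under `u`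
appear in increasing order, i.e. `u⁻¹ 1 < u⁻¹ 2 < ⋯ < u⁻¹ n`. -/
def IsGrassmannian (n : ℤ) (u : ℤ → ℤ) : Prop :=
  ∀ i j p q : ℤ, 1 ≤ i → i < j → j ≤ n → u p = i → u q = j → p < q

/-- The composite `u · t_{a,b} · t_{c,d}` is defined. -/
def Def2 (n : ℤ) (u : ℤ → ℤ) (a b c d : ℤ) : Prop :=
  DefinedAt u a b ∧ DefinedAt (u ∘ affT n a b) c d

/-- The composite `u · t_{a₁,b₁} · t_{a₂,b₂} · t_{a₃,b₃}` is defined. -/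
def Def3 (n : ℤ) (u : ℤ → ℤ) (a₁ b₁ a₂ b₂ a₃ b₃ : ℤ) : Prop :=
  DefinedAt u a₁ b₁ ∧ DefinedAt (u ∘ affT n a₁ b₁) a₂ b₂ ∧
    DefinedAt ((u ∘ affT n a₁ b₁) ∘ affT n a₂ b₂) a₃ b₃

theorem apply_add_of_dvd {n p : ℤ} {σ : ℤ → ℤ} (hσ : ∀ i, σ (i + n) = σ i + n)
    (hp : n ∣ p) (i : ℤ) : σ (i + p) = σ i + p := by
  have hper : Periodic (fun i => σ i - i) n := fun i => by
    simp only [hσ]; ring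
  obtain ⟨m, rfl⟩ := hp
  have := hper.int_mul m i
  rw [Int.cast_id, mul_comm] at this
  linarith

theorem dvd_sub_apply_iff {n : ℤ} {σ : ℤ → ℤ} (hσ : ∀ i, σ (i + n) = σ i + n)
    (hinj : Injective σ) (i j : ℤ) : n ∣ σ i - σ j ↔ n ∣ i - j := by
  constructor
  · intro h
    have hij : σ (j + (σ i - σ j)) = σ i := by rw [apply_add_of_dvd hσ h]; ring
    rw [← hinj hij]
    simpa using h
  · intro h
    have hij := apply_add_of_dvd hσ h j
    rw [add_sub_cancel] at hij
    rw [hij]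
    simpa using h

section affT

variable {n a b i : ℤ}

theorem affT_of_dvd (h : n ∣ i - a) : affT n a b i = i - a + b := by
  simp [affT, Int.dvd_iff_emod_eq_zero.mp h]

theorem affT_of_not_dvd_of_dvd (ha : ¬ n ∣ i - a) (hb : n ∣ i - b) :
    affT n a b i = i - b + a := by
  simp [affT, Int.dvd_iff_emod_eq_zero.not.mp ha, hb]

theorem affT_of_not_dvd (ha : ¬ n ∣ i - a) (hb : ¬ n ∣ i - b) : affT n a b i = i := by
  simp [affT, Int.dvd_iff_emod_eq_zero.not.mp ha, Int.dvd_iff_emod_eq_zero.not.mp hb]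

theorem affT_add_self (n a b i : ℤ) : affT n a b (i + n) = affT n a b i + n := by
  have hshift (x : ℤ) : n ∣ i + n - x ↔ n ∣ i - x := by
    rw [show i + n - x = i - x + n by ring, dvd_add_self_right]
  by_cases ha : n ∣ i - a
  · rw [affT_of_dvd ha, affT_of_dvd ((hshift a).2 ha)]; ring
  by_cases hb : n ∣ i - b
  · rw [affT_of_not_dvd_of_dvd ha hb,
      affT_of_not_dvd_of_dvd (mt (hshift a).1 ha) ((hshift b).2 hb)]; ring
  · rw [affT_of_not_dvd ha hb, affT_of_not_dvd (mt (hshift a).1 ha) (mt (hshift b).1 hb)]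

theorem affT_involutive (h : ¬ n ∣ b - a) : Involutive (affT n a b) := by
  intro i
  by_cases ha : n ∣ i - a
  · have hb : n ∣ i - a + b - b := by simpa using ha
    have ha' : ¬ n ∣ i - a + b - a := fun h' => h (by
      simpa [show i - a + b - a - (i - a) = b - a by ring] using dvd_sub h' ha)
    rw [affT_of_dvd ha, affT_of_not_dvd_of_dvd ha' hb]; ring
  by_cases hb : n ∣ i - b
  · have ha' : n ∣ i - b + a - a := by simpa using hb
    rw [affT_of_not_dvd_of_dvd ha hb, affT_of_dvd ha']; ring
  · rw [affT_of_not_dvd ha hb, affT_of_not_dvd ha hb]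

end affT

theorem comp_affT_eq_affT_comp {n x y : ℤ} {σ : ℤ → ℤ} (hσ : ∀ i, σ (i + n) = σ i + n)
    (hinj : Injective σ) : σ ∘ affT n x y = affT n (σ x) (σ y) ∘ σ := by
  funext i
  have hsub := dvd_sub_apply_iff hσ hinj
  simp only [comp_apply]
  by_cases hx : n ∣ i - x
  · have hi := apply_add_of_dvd hσ hx x
    rw [add_sub_cancel] at hi
    rw [affT_of_dvd hx, affT_of_dvd ((hsub i x).2 hx), show i - x + y = y + (i - x) by ring,
      apply_add_of_dvd hσ hx y]
    linarith
  by_cases hy : n ∣ i - y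
  · have hi := apply_add_of_dvd hσ hy y
    rw [add_sub_cancel] at hi
    rw [affT_of_not_dvd_of_dvd hx hy,
      affT_of_not_dvd_of_dvd (mt (hsub i x).1 hx) ((hsub i y).2 hy),
      show i - y + x = x + (i - y) by ring, apply_add_of_dvd hσ hy x]
    linarith
  · rw [affT_of_not_dvd hx hy, affT_of_not_dvd (mt (hsub i x).1 hx) (mt (hsub i y).1 hy)]

theorem not_dvd_of_dvd_of_sub_lt {n p x : ℤ} (hp : n ∣ p) (h₁ : -n < x - p) (h₂ : x - p < n)
    (hne : x ≠ p) : ¬ n ∣ x := fun hx =>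
  hne (sub_eq_zero.mp (Int.eq_zero_of_abs_lt_dvd (dvd_sub hx hp) (abs_lt.mpr ⟨h₁, h₂⟩)))

section Relation

variable {n a b c d i : ℤ}

theorem affT_apply_of_dvd_sub_right (hp : n ∣ c - b) (hab : a < b) (hbn : b - a < n) :
    affT n a b c = c - b + a :=
  affT_of_not_dvd_of_dvd (not_dvd_of_dvd_of_sub_lt hp (by omega) (by omega) (by omega)) hp

theorem affT_apply_eq_self_of_lt_of_le (hp : n ∣ c - b) (hab : a < b)
    (hq : b - a + (d - c) < n) (hci : c < i) (hid : i ≤ d) : affT n a b i = i :=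
  affT_of_not_dvd (not_dvd_of_dvd_of_sub_lt hp (by omega) (by omega) (by omega))
    (not_dvd_of_dvd_of_sub_lt hp (by omega) (by omega) (by omega))

theorem affT_conj_apply_left (hp : n ∣ c - b) : affT n (c - b + a) d a = d - (c - b) := by
  rw [affT_of_dvd (by simpa using hp.neg_right)]; ring

theorem affT_conj_apply_eq_self_of_lt_of_le (hp : n ∣ c - b) (hcd : c < d)
    (hq : b - a + (d - c) < n) (hai : a < i) (hib : i ≤ b) : affT n (c - b + a) d i = i :=
  affT_of_not_dvd (not_dvd_of_dvd_of_sub_lt hp.neg_right (by omega) (by omega) (by omega))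
    (not_dvd_of_dvd_of_sub_lt hp.neg_right (by omega) (by omega) (by omega))

theorem affT_comp_affT_of_dvd (hp : n ∣ c - b) (hab : a < b) (hcd : c < d)
    (hq : b - a + (d - c) < n) :
    affT n a b ∘ affT n c d = affT n (c - b + a) d ∘ affT n a b := by
  rw [comp_affT_eq_affT_comp (affT_add_self n a b) (affT_involutive
      (not_dvd_of_dvd_of_sub_lt (dvd_zero n) (by omega) (by omega) (by omega))).injective,
    affT_apply_of_dvd_sub_right hp hab (by omega),
    affT_apply_eq_self_of_lt_of_le hp hab hq hcd le_rfl]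

variable {u : ℤ → ℤ}

theorem Def2.definedAt_conj (hdef : Def2 n u a b c d) (hu : ∀ i, u (i + n) = u i + n)
    (hp : n ∣ c - b) (hab : a < b) (hcd : c < d) (hq : b - a + (d - c) < n)
    (hud : u (d - (c - b)) ≤ 0) : DefinedAt u (c - b + a) d := by
  obtain ⟨⟨-, hub, hmab⟩, hvc, hvd, hmcd⟩ := hdef
  have hc := affT_apply_of_dvd_sub_right (n := n) hp hab (by omega)
  have hd := affT_apply_eq_self_of_lt_of_le (n := n) hp hab hq hcd le_rfl
  simp only [comp_apply, hc, hd] at hvc hvd hmcd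
  have hshift := apply_add_of_dvd hu hp
  have huc : u c = u b + (c - b) := by simpa using hshift b
  have hud' : u d = u (d - (c - b)) + (c - b) := by simpa using hshift (d - (c - b))
  refine ⟨hvc, hvd, fun i hi₁ hi₂ => ?_⟩
  rcases lt_trichotomy i c with hic | rfl | hic
  · have hui : u i = u (i - (c - b)) + (c - b) := by simpa using hshift (i - (c - b))
    have hua : u (c - b + a) = u a + (c - b) := by rw [add_comm]; exact hshift a
    have := hmab (i - (c - b)) (by omega) (by omega)
    omega
  · omega
  · simpa only [affT_apply_eq_self_of_lt_of_le hp hab hq hic hi₂.le] using hmcd i hic hi₂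

theorem Def2.definedAt_comp_affT_conj (hdef : Def2 n u a b c d) (hu : ∀ i, u (i + n) = u i + n)
    (hp : n ∣ c - b) (hab : a < b) (hcd : c < d) (hq : b - a + (d - c) < n)
    (hud : u (d - (c - b)) ≤ 0) : DefinedAt (u ∘ affT n (c - b + a) d) a b := by
  obtain ⟨⟨-, hub, hmab⟩, hvc, hvd, -⟩ := hdef
  simp only [comp_apply, affT_apply_of_dvd_sub_right hp hab (by omega),
    affT_apply_eq_self_of_lt_of_le hp hab hq hcd le_rfl] at hvc hvd
  have hshift := apply_add_of_dvd hu hp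
  have hua' : u (c - b + a) = u a + (c - b) := by rw [add_comm]; exact hshift a
  have hud' : u d = u (d - (c - b)) + (c - b) := by simpa using hshift (d - (c - b))
  refine ⟨?_, ?_, fun i hi₁ hi₂ => ?_⟩
  · simpa only [comp_apply, affT_conj_apply_left hp] using hud
  · simpa only [comp_apply, affT_conj_apply_eq_self_of_lt_of_le hp hcd hq hab le_rfl] using hub
  · simp only [comp_apply, affT_conj_apply_left hp,
      affT_conj_apply_eq_self_of_lt_of_le hp hcd hq hab le_rfl,
      affT_conj_apply_eq_self_of_lt_of_le hp hcd hq hi₁ hi₂.le]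
    have := hmab i hi₁ hi₂
    omega

end Relation

theorem stmt14_general (k : ℤ) (u : ℤ → ℤ)
    (hu : IsAffinePerm (k + 1) u)
    (a b c d : ℤ) (hab : a < b) (hcd : c < d)
    (hq : (b - a) + (d - c) < k + 1)
    (hmod : b % (k + 1) = c % (k + 1))
    (huaq : u (a + ((b - a) + (d - c))) ≤ 0)
    (hdef : Def2 (k + 1) u a b c d) :
    Def2 (k + 1) u (d - ((b - a) + (d - c))) d a b ∧
      (u ∘ affT (k + 1) a b) ∘ affT (k + 1) c d =
        (u ∘ affT (k + 1) (d - ((b - a) + (d - c))) d) ∘ affT (k + 1) a b := by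
  obtain ⟨-, hper, -⟩ := hu
  have hp : k + 1 ∣ c - b := Int.ModEq.dvd hmod
  have hud : u (d - (c - b)) ≤ 0 := by rwa [show d - (c - b) = a + ((b - a) + (d - c)) by ring]
  rw [show d - ((b - a) + (d - c)) = c - b + a by ring]
  refine ⟨⟨hdef.definedAt_conj hper hp hab hcd hq hud,
    hdef.definedAt_comp_affT_conj hper hp hab hcd hq hud⟩, ?_⟩
  rw [comp_assoc, comp_assoc, affT_comp_affT_of_dvd hp hab hcd hq]

theorem stmt14 (k : ℤ) (hk : 1 ≤ k) (u : ℤ → ℤ)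
    (hu : IsAffinePerm (k + 1) u) (hg : IsGrassmannian (k + 1) u)
    (a b c d : ℤ) (hab : a < b) (hbc : b < c) (hcd : c < d)
    (hba : b - a ≤ k) (hdc : d - c ≤ k)
    (hq : (b - a) + (d - c) < k + 1)
    (hmod : b % (k + 1) = c % (k + 1))
    (huaq : u (a + ((b - a) + (d - c))) ≤ 0)
    (hdef : Def2 (k + 1) u a b c d) :
    Def2 (k + 1) u (d - ((b - a) + (d - c))) d a b ∧
      (u ∘ affT (k + 1) a b) ∘ affT (k + 1) c d =
        (u ∘ affT (k + 1) (d - ((b - a) + (d - c))) d) ∘ affT (k + 1) a b :=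
  stmt14_general k u hu a b c d hab hcd hq hmod huaq hdef
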